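/- Let λ ∈ {1,-1}, ρ ∈ ℝ, q ∈ ℂ, and set p = ρq (the homogeneous Robin condition q_x(0,t) = ρ q(0,t)). Define N(k) = diag(2k - iρ, -(2k + iρ)). Then for every k ∈ ℂ, (2ik²σ₃ - Q̃(-k)) · N(k) = N(k) · (2ik²σ₃ - Q̃(k)), where Q̃ is built from the pair (q,p). -/

import Mathlib

open Complex Matrix

/-- The Pauli matrix `σ₃ = diag(1,-1)`. -/
def sigma3 : Matrix (Fin 2) (Fin 2) ℂ := !![1, 0; 0, -1]

/-- The matrix `Q̃(k)` built from boundary values `q = q(0,t)`, `p = qₓ(0,t)`: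
`Q̃(k) = [[iλ|q|², 2kq + ip], [-2kλ·conj(q) + iλ·conj(p), -iλ|q|²]]`. -/
noncomputable def Qtilde (lam q p k : ℂ) : Matrix (Fin 2) (Fin 2) ℂ :=
  !![Complex.I * lam * ((‖q‖ : ℝ) : ℂ) ^ 2, 2 * k * q + Complex.I * p;
     -2 * k * lam * (starRingEnd ℂ) q + Complex.I * lam * (starRingEnd ℂ) p,
     -(Complex.I * lam * ((‖q‖ : ℝ) : ℂ) ^ 2)]

theorem Matrix.mul_diag_two_eq_diag_two_mul {R : Type*} [CommRing R]
    (A B : Matrix (Fin 2) (Fin 2) R) (x y : R)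
    (h₀₀ : A 0 0 = B 0 0) (h₀₁ : A 0 1 * y = x * B 0 1)
    (h₁₀ : A 1 0 * x = y * B 1 0) (h₁₁ : A 1 1 = B 1 1) :
    A * !![x, 0; 0, y] = !![x, 0; 0, y] * B := by
  ext i j
  fin_cases i <;> fin_cases j <;> simp [Matrix.mul_apply, Fin.sum_univ_two, *] <;> ring

/-- Under the Robin condition `p = ρq` both off-diagonal entries factor through a diagonal entry
of `N(k)`, while the diagonal entries are even in `k`. -/
theorem smul_sigma3_sub_Qtilde_robin (lam : ℂ) (ρ : ℝ) (q k : ℂ) :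
    (2 * I * k ^ 2) • sigma3 - Qtilde lam q ((ρ : ℂ) * q) k =
      !![2 * I * k ^ 2 - I * lam * ((‖q‖ : ℝ) : ℂ) ^ 2, -((2 * k + I * ρ) * q);
         lam * (2 * k - I * ρ) * (starRingEnd ℂ) q,
         -(2 * I * k ^ 2 - I * lam * ((‖q‖ : ℝ) : ℂ) ^ 2)] := by
  ext i j
  fin_cases i <;> fin_cases j <;> simp [sigma3, Qtilde, Complex.conj_ofReal] <;> ring

theorem robin_symmetry_general (lam : ℂ) (ρ : ℝ) (q : ℂ) :
    ∀ k : ℂ,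
      ((2 * Complex.I * k ^ 2) • sigma3 - Qtilde lam q ((ρ : ℂ) * q) (-k))
          * !![2 * k - Complex.I * (ρ : ℂ), 0; 0, -(2 * k + Complex.I * (ρ : ℂ))]
        = !![2 * k - Complex.I * (ρ : ℂ), 0; 0, -(2 * k + Complex.I * (ρ : ℂ))]
          * ((2 * Complex.I * k ^ 2) • sigma3 - Qtilde lam q ((ρ : ℂ) * q) k) := by
  intro k
  rw [smul_sigma3_sub_Qtilde_robin, ← neg_sq k, smul_sigma3_sub_Qtilde_robin]
  apply Matrix.mul_diag_two_eq_diag_two_mul <;>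
    simp only [of_apply, cons_val', cons_val_zero, cons_val_one, cons_val_fin_one] <;> ring

/-- For the homogeneous Robin boundary condition `p = ρq`, the matrix
`N(k) = diag(2k - iρ, -(2k + iρ))` intertwines `2ik²σ₃ - Q̃(-k)` and `2ik²σ₃ - Q̃(k)`. -/
theorem robin_symmetry (lam : ℂ) (hlam : lam = 1 ∨ lam = -1) (ρ : ℝ) (q : ℂ) :
    ∀ k : ℂ,
      ((2 * Complex.I * k ^ 2) • sigma3 - Qtilde lam q ((ρ : ℂ) * q) (-k))
          * !![2 * k - Complex.I * (ρ : ℂ), 0; 0, -(2 * k + Complex.I * (ρ : ℂ))]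
        = !![2 * k - Complex.I * (ρ : ℂ), 0; 0, -(2 * k + Complex.I * (ρ : ℂ))]
          * ((2 * Complex.I * k ^ 2) • sigma3 - Qtilde lam q ((ρ : ℂ) * q) k) :=
  robin_symmetry_general lam ρ q
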